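/- Assume J ⊆ (0,+∞) is a nondegenerate interval such that either (a) J is bounded and 0 belongs to the closure of J, or (b) J is unbounded and 0 does not belong to the closure of J. If f : J → J is continuous on J and satisfies f^3(x) = f(x)^3 / x^2 for all x ∈ J, then there exists c > 0 with f(x) = c*x for every x ∈ J; moreover c ≤ 1 in case (a) and c ≥ 1 in case (b). -/

import Mathlib

/-!
Along an orbit of `f` the logarithms `vₙ = log (f^[n] x)` satisfy
`vₙ₊₃ = 3 vₙ₊₁ - 2 vₙ`, whose characteristic roots are `1, 1, -2`, so
`vₙ = A + B n + C (-2)ⁿ`. In both cases `J` is bounded on one side on the log scale, which forces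
`C = 0`, i.e. `f (f x) * x = f x ^ 2`: the ratio `t x = f x / x` is constant along orbits and
`f^[n] x = x * t(x) ^ n`.

This identity makes `f` injective, hence strictly monotone; a decreasing `f` would make `t`
injective, and `t ∘ f = t` then forces `f = id`. Comparing orbits of an increasing `f` shows that
`t` is monotone. Where `t z < 1` the orbit of `z` tends to `0`, so `t` is constant below `z`;
symmetrically `t` is constant above any `z` with `t z > 1`. By the intermediate value theorem a
nonconstant `t` would take such a value strictly between two of its values, so `t` is a constant
`c`, and `x cⁿ ∈ J` gives `c ≤ 1` when `J` is bounded and `c ≥ 1` when `J` stays away from `0`.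
-/

open Set Filter Real

theorem MonotoneOn.iterate {α : Type*} [Preorder α] {s : Set α} {g : α → α}
    (hg : MonotoneOn g s) (hmap : MapsTo g s s) (n : ℕ) : MonotoneOn g^[n] s := by
  induction n with
  | zero => exact monotoneOn_id
  | succ n ih => rw [Function.iterate_succ']; exact hg.comp ih (hmap.iterate n)

theorem ContinuousOn.strictMonoOn_or_strictAntiOn_of_injOn {α δ : Type*}
    [ConditionallyCompleteLinearOrder α] [TopologicalSpace α] [OrderTopology α]
    [DenselyOrdered α] [LinearOrder δ] [TopologicalSpace δ] [OrderClosedTopology δ]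
    {s : Set α} {g : α → δ} (hs : s.OrdConnected) (hg : ContinuousOn g s) (hinj : InjOn g s) :
    StrictMonoOn g s ∨ StrictAntiOn g s := by
  by_contra! h
  obtain ⟨hmono, hanti⟩ := h
  simp only [StrictMonoOn, StrictAntiOn, not_forall, not_lt] at hmono hanti
  obtain ⟨a, ha, b, hb, hab, hgab⟩ := hmono
  obtain ⟨c, hc, d, hd, hcd, hgcd⟩ := hanti
  set I := Icc (min a c) (max b d)
  have hsub : I ⊆ s := hs.out (min_rec' _ ha hc) (max_rec' _ hb hd)
  have ha' : a ∈ I := ⟨min_le_left _ _, hab.le.trans (le_max_left _ _)⟩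
  have hb' : b ∈ I := ⟨(min_le_left _ _).trans hab.le, le_max_left _ _⟩
  have hc' : c ∈ I := ⟨min_le_right _ _, hcd.le.trans (le_max_right _ _)⟩
  have hd' : d ∈ I := ⟨(min_le_right _ _).trans hcd.le, le_max_right _ _⟩
  rcases (hg.mono hsub).strictMonoOn_of_injOn_Icc' (ha'.1.trans ha'.2) (hinj.mono hsub)
    with h | h
  · exact (h ha' hb' hab).not_ge hgab
  · exact (h hc' hd' hcd).not_ge hgcd

theorem exists_pos_forall_le_of_zero_notMem_closure {J : Set ℝ} (hJpos : J ⊆ Ioi 0)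
    (h : (0 : ℝ) ∉ closure J) : ∃ ε > 0, ∀ y ∈ J, ε ≤ y := by
  rw [Metric.mem_closure_iff] at h
  push Not at h
  obtain ⟨ε, hε, hle⟩ := h
  refine ⟨ε, hε, fun y hy => ?_⟩
  simpa [abs_of_pos (show 0 < y from hJpos hy)] using hle y hy

theorem exists_eq_add_mul_add_mul_neg_two_pow {v : ℕ → ℝ}
    (hv : ∀ n, v (n + 3) = 3 * v (n + 1) - 2 * v n) :
    ∃ A B C : ℝ, ∀ n : ℕ, v n = A + B * n + C * (-2) ^ n := by
  set C := (v 2 - 2 * v 1 + v 0) / 9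
  refine ⟨v 0 - C, v 1 - v 0 + 3 * C, C, fun n => ?_⟩
  induction n using Nat.strong_induction_on with
  | _ n ih =>
    match n, ih with
    | 0, _ => ring
    | 1, _ => push_cast; ring
    | 2, _ => push_cast; ring
    | n + 3, ih => rw [hv, ih (n + 1) (by omega), ih n (by omega)]; push_cast; ring

theorem tendsto_add_mul_add_mul_four_pow_atTop {a b c : ℝ} (hc : 0 < c) :
    Tendsto (fun m : ℕ => a + b * m + c * 4 ^ m) atTop atTop := by
  have hsmall : Tendsto (fun m : ℕ => a * (4 ^ m)⁻¹ + b * (m / 4 ^ m)) atTop (nhds 0) := by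
    have h0 := tendsto_pow_const_div_const_pow_of_one_lt 0 (by norm_num : (1 : ℝ) < 4)
    have h1 := tendsto_pow_const_div_const_pow_of_one_lt 1 (by norm_num : (1 : ℝ) < 4)
    simpa using (h0.const_mul a).add (h1.const_mul b)
  refine ((tendsto_pow_atTop_atTop_of_one_lt (by norm_num : (1 : ℝ) < 4)).atTop_mul_pos hc
    (by simpa using hsmall.const_add c)).congr fun m => ?_
  field_simp
  ring

theorem eq_zero_of_bddAbove_range_add_mul_add_mul_neg_two_pow {A B C : ℝ}
    (h : BddAbove (range fun n : ℕ => A + B * n + C * (-2) ^ n)) : C = 0 := by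
  have h4 (m : ℕ) : (-2 : ℝ) ^ (2 * m) = 4 ^ m := by rw [pow_mul]; norm_num
  by_contra hC
  rcases lt_or_gt_of_ne hC with hC | hC
  · refine not_bddAbove_of_tendsto_atTop
      (tendsto_add_mul_add_mul_four_pow_atTop (a := A + B) (b := 2 * B) (c := -2 * C)
        (by linarith)) (h.mono ?_)
    rintro _ ⟨m, rfl⟩
    exact ⟨2 * m + 1, by simp only [pow_succ, h4]; push_cast; ring⟩
  · refine not_bddAbove_of_tendsto_atTop
      (tendsto_add_mul_add_mul_four_pow_atTop (a := A) (b := 2 * B) hC) (h.mono ?_)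
    rintro _ ⟨m, rfl⟩
    exact ⟨2 * m, by simp only [h4]; push_cast; ring⟩

theorem second_diff_eq_zero_of_bddAbove {v : ℕ → ℝ}
    (hv : ∀ n, v (n + 3) = 3 * v (n + 1) - 2 * v n) (hb : BddAbove (range v)) :
    v 2 - 2 * v 1 + v 0 = 0 := by
  obtain ⟨A, B, C, hABC⟩ := exists_eq_add_mul_add_mul_neg_two_pow hv
  have hC : C = 0 :=
    eq_zero_of_bddAbove_range_add_mul_add_mul_neg_two_pow (funext hABC ▸ hb)
  rw [hABC 0, hABC 1, hABC 2, hC]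
  push_cast
  ring

theorem second_diff_eq_zero_of_bddBelow {v : ℕ → ℝ}
    (hv : ∀ n, v (n + 3) = 3 * v (n + 1) - 2 * v n) (hb : BddBelow (range v)) :
    v 2 - 2 * v 1 + v 0 = 0 := by
  obtain ⟨m, hm⟩ := hb
  have := second_diff_eq_zero_of_bddAbove (v := fun n => -v n) (fun n => by rw [hv]; ring)
    ⟨-m, forall_mem_range.2 fun n => neg_le_neg (hm (mem_range_self n))⟩
  linarith

section

variable {J : Set ℝ} {f : ℝ → ℝ}

theorem apply_apply_mul_eq_sq (hJpos : J ⊆ Ioi 0) (hmap : MapsTo f J J)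
    (heq : ∀ x ∈ J, f (f (f x)) = f x ^ 3 / x ^ 2)
    (hb : BddAbove J ∨ ∃ ε > 0, ∀ y ∈ J, ε ≤ y) {x : ℝ} (hx : x ∈ J) :
    f (f x) * x = f x ^ 2 := by
  have hmem (n : ℕ) : f^[n] x ∈ J := hmap.iterate n hx
  have hpos (n : ℕ) : 0 < f^[n] x := hJpos (hmem n)
  set v : ℕ → ℝ := fun n => log (f^[n] x)
  have hv (n : ℕ) : v (n + 3) = 3 * v (n + 1) - 2 * v n := by
    simp only [v, Function.iterate_succ_apply']
    have hfn : 0 < f (f^[n] x) := hJpos (hmap (hmem n))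
    rw [heq _ (hmem n), log_div (pow_pos hfn 3).ne' (pow_pos (hpos n) 2).ne', log_pow, log_pow]
    push_cast
    ring
  have hv2 : v 2 - 2 * v 1 + v 0 = 0 := by
    rcases hb with ⟨M, hM⟩ | ⟨ε, hε, hle⟩
    · exact second_diff_eq_zero_of_bddAbove hv
        ⟨log M, forall_mem_range.2 fun n => log_le_log (hpos n) (hM (hmem n))⟩
    · exact second_diff_eq_zero_of_bddBelow hv
        ⟨log ε, forall_mem_range.2 fun n => log_le_log hε (hle _ (hmem n))⟩
  have hx0 : 0 < x := hJpos hx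
  have hfx : 0 < f x := hJpos (hmap hx)
  have hffx : 0 < f (f x) := hJpos (hmap (hmap hx))
  simp only [v, Function.iterate_succ_apply', Function.iterate_zero_apply] at hv2
  rw [← exp_log (mul_pos hffx hx0), ← exp_log (pow_pos hfx 2), log_mul hffx.ne' hx0.ne', log_pow]
  congr 1
  push_cast
  linarith

theorem apply_apply_div_apply_eq (hJpos : J ⊆ Ioi 0) (hmap : MapsTo f J J)
    (hsq : ∀ x ∈ J, f (f x) * x = f x ^ 2) {x : ℝ} (hx : x ∈ J) :
    f (f x) / f x = f x / x := by
  rw [div_eq_div_iff (hJpos (hmap hx)).ne' (hJpos hx).ne', hsq x hx, sq]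

theorem apply_iterate_div_iterate_eq (hJpos : J ⊆ Ioi 0) (hmap : MapsTo f J J)
    (hsq : ∀ x ∈ J, f (f x) * x = f x ^ 2) {x : ℝ} (hx : x ∈ J) (n : ℕ) :
    f (f^[n] x) / f^[n] x = f x / x := by
  induction n with
  | zero => rfl
  | succ n ih =>
    rw [Function.iterate_succ_apply',
      apply_apply_div_apply_eq hJpos hmap hsq (hmap.iterate n hx), ih]

theorem iterate_eq_mul_pow (hJpos : J ⊆ Ioi 0) (hmap : MapsTo f J J)
    (hsq : ∀ x ∈ J, f (f x) * x = f x ^ 2) {x : ℝ} (hx : x ∈ J) (n : ℕ) :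
    f^[n] x = x * (f x / x) ^ n := by
  induction n with
  | zero => simp
  | succ n ih =>
    have hn : f^[n] x ≠ 0 := (hJpos (hmap.iterate n hx)).ne'
    rw [Function.iterate_succ_apply', ← div_mul_cancel₀ (f (f^[n] x)) hn,
      apply_iterate_div_iterate_eq hJpos hmap hsq hx, ih, pow_succ]
    ring

theorem injOn_of_apply_apply_mul_eq_sq (hJpos : J ⊆ Ioi 0) (hmap : MapsTo f J J)
    (hsq : ∀ x ∈ J, f (f x) * x = f x ^ 2) : InjOn f J := by
  intro p hp q hq hpq
  have h := (hsq p hp).trans ((congrArg (· ^ 2) hpq).trans (hsq q hq).symm)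
  rw [hpq] at h
  exact mul_left_cancel₀ (hJpos (hmap (hmap hq))).ne' h

theorem strictMonoOn_of_apply_apply_mul_eq_sq (hJpos : J ⊆ Ioi 0) (hJ : J.OrdConnected)
    (hmap : MapsTo f J J) (hcont : ContinuousOn f J)
    (hsq : ∀ x ∈ J, f (f x) * x = f x ^ 2) : StrictMonoOn f J := by
  rcases hcont.strictMonoOn_or_strictAntiOn_of_injOn hJ
    (injOn_of_apply_apply_mul_eq_sq hJpos hmap hsq) with hmono | hanti
  · exact hmono
  have hratio : StrictAntiOn (fun x => f x / x) J := fun a ha b hb hab => by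
    have : 0 < a := hJpos ha
    have : 0 < b := hJpos hb
    have : 0 < f a := hJpos (hmap ha)
    have : f b < f a := hanti ha hb hab
    calc f b / b < f a / b := by gcongr
      _ < f a / a := by gcongr
  exact strictMonoOn_id.congr fun x hx =>
    (hratio.injOn (hmap hx) hx (apply_apply_div_apply_eq hJpos hmap hsq hx)).symm

theorem monotoneOn_apply_div (hJpos : J ⊆ Ioi 0) (hJ : J.OrdConnected)
    (hmap : MapsTo f J J) (hcont : ContinuousOn f J)
    (hsq : ∀ x ∈ J, f (f x) * x = f x ^ 2) : MonotoneOn (fun x => f x / x) J := by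
  intro x hx y hy hxy
  by_contra! hlt
  have hx0 : 0 < x := hJpos hx
  have hty : 0 < f y / y := div_pos (hJpos (hmap hy)) (hJpos hy)
  obtain ⟨n, hn⟩ := pow_unbounded_of_one_lt (y / x) ((one_lt_div hty).2 hlt)
  rw [div_pow, div_lt_div_iff₀ hx0 (pow_pos hty n)] at hn
  have := (strictMonoOn_of_apply_apply_mul_eq_sq hJpos hJ hmap hcont hsq).monotoneOn.iterate
    hmap n hx hy hxy
  rw [iterate_eq_mul_pow hJpos hmap hsq hx, iterate_eq_mul_pow hJpos hmap hsq hy] at this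
  linarith

theorem div_eq_of_le_of_div_lt_one (hJpos : J ⊆ Ioi 0) (hJ : J.OrdConnected)
    (hmap : MapsTo f J J) (hcont : ContinuousOn f J) (hsq : ∀ x ∈ J, f (f x) * x = f x ^ 2)
    {y z : ℝ} (hy : y ∈ J) (hz : z ∈ J) (hyz : y ≤ z) (hz1 : f z / z < 1) :
    f y / y = f z / z := by
  have hmono := monotoneOn_apply_div hJpos hJ hmap hcont hsq
  have hz0 : 0 < z := hJpos hz
  obtain ⟨n, hn⟩ := exists_pow_lt_of_lt_one (div_pos (hJpos hy) hz0) hz1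
  have hle : f^[n] z ≤ y := by
    rw [iterate_eq_mul_pow hJpos hmap hsq hz, ← le_div_iff₀' hz0]
    exact hn.le
  refine le_antisymm (hmono hy hz hyz) ?_
  simpa only [apply_iterate_div_iterate_eq hJpos hmap hsq hz] using
    hmono (hmap.iterate n hz) hy hle

theorem div_eq_of_le_of_one_lt_div (hJpos : J ⊆ Ioi 0) (hJ : J.OrdConnected)
    (hmap : MapsTo f J J) (hcont : ContinuousOn f J) (hsq : ∀ x ∈ J, f (f x) * x = f x ^ 2)
    {y z : ℝ} (hy : y ∈ J) (hz : z ∈ J) (hyz : y ≤ z) (hy1 : 1 < f y / y) :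
    f z / z = f y / y := by
  have hmono := monotoneOn_apply_div hJpos hJ hmap hcont hsq
  have hy0 : 0 < y := hJpos hy
  obtain ⟨n, hn⟩ := pow_unbounded_of_one_lt (z / y) hy1
  have hle : z ≤ f^[n] y := by
    rw [iterate_eq_mul_pow hJpos hmap hsq hy, ← div_le_iff₀' hy0]
    exact hn.le
  refine le_antisymm ?_ (hmono hy hz hyz)
  simpa only [apply_iterate_div_iterate_eq hJpos hmap hsq hy] using
    hmono hz (hmap.iterate n hy) hle

theorem div_eq_div_of_apply_apply_mul_eq_sq (hJpos : J ⊆ Ioi 0) (hJ : J.OrdConnected)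
    (hmap : MapsTo f J J) (hcont : ContinuousOn f J) (hsq : ∀ x ∈ J, f (f x) * x = f x ^ 2)
    {x y : ℝ} (hx : x ∈ J) (hy : y ∈ J) : f x / x = f y / y := by
  wlog hxy : x ≤ y generalizing x y
  · exact (this hy hx (le_of_not_ge hxy)).symm
  by_contra hne
  have hlt : f x / x < f y / y :=
    (monotoneOn_apply_div hJpos hJ hmap hcont hsq hx hy hxy).lt_of_ne hne
  obtain ⟨m, ⟨hxm, hmy⟩, hm1⟩ := ((Ioo_infinite hlt).sdiff (finite_singleton 1)).nonempty
  have hsub : Icc x y ⊆ J := hJ.out hx hy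
  have hcont' : ContinuousOn (fun x => f x / x) (Icc x y) :=
    (hcont.div continuousOn_id fun z hz => (hJpos hz).ne').mono hsub
  obtain ⟨z, hz, hzm⟩ := intermediate_value_Icc hxy hcont' ⟨hxm.le, hmy.le⟩
  simp only at hzm
  rcases lt_or_gt_of_ne hm1 with hm1 | hm1
  · have := div_eq_of_le_of_div_lt_one hJpos hJ hmap hcont hsq hx (hsub hz) hz.1 (hzm ▸ hm1)
    linarith
  · have := div_eq_of_le_of_one_lt_div hJpos hJ hmap hcont hsq (hsub hz) hy hz.2 (hzm ▸ hm1)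
    linarith

theorem div_le_one_of_bddAbove (hJpos : J ⊆ Ioi 0) (hmap : MapsTo f J J)
    (hsq : ∀ x ∈ J, f (f x) * x = f x ^ 2) (hb : BddAbove J) {x : ℝ} (hx : x ∈ J) :
    f x / x ≤ 1 := by
  obtain ⟨M, hM⟩ := hb
  by_contra! h
  obtain ⟨n, hn⟩ := pow_unbounded_of_one_lt (M / x) h
  have := hM (hmap.iterate n hx)
  rw [iterate_eq_mul_pow hJpos hmap hsq hx] at this
  rw [div_lt_iff₀' (hJpos hx)] at hn
  linarith

theorem one_le_div_of_forall_le (hJpos : J ⊆ Ioi 0) (hmap : MapsTo f J J)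
    (hsq : ∀ x ∈ J, f (f x) * x = f x ^ 2) {ε : ℝ} (hε : 0 < ε) (hle : ∀ y ∈ J, ε ≤ y)
    {x : ℝ} (hx : x ∈ J) : 1 ≤ f x / x := by
  by_contra! h
  obtain ⟨n, hn⟩ := exists_pow_lt_of_lt_one (div_pos hε (hJpos hx)) h
  have := hle _ (hmap.iterate n hx)
  rw [iterate_eq_mul_pow hJpos hmap hsq hx] at this
  rw [lt_div_iff₀' (hJpos hx)] at hn
  linarith

end

theorem stmt_18_general (J : Set ℝ) (hJpos : J ⊆ Set.Ioi (0 : ℝ)) (hJ : J.OrdConnected)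
    (hcase : (Bornology.IsBounded J ∧ (0 : ℝ) ∈ closure J) ∨
      (¬Bornology.IsBounded J ∧ (0 : ℝ) ∉ closure J))
    (f : ℝ → ℝ) (hmap : Set.MapsTo f J J) (hcont : ContinuousOn f J)
    (heq : ∀ x ∈ J, f (f (f x)) = (f x) ^ 3 / x ^ 2) :
    ∃ c : ℝ, 0 < c ∧ (∀ x ∈ J, f x = c * x) ∧
      (Bornology.IsBounded J ∧ (0 : ℝ) ∈ closure J → c ≤ 1) ∧
      (¬Bornology.IsBounded J ∧ (0 : ℝ) ∉ closure J → 1 ≤ c) := by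
  have hbound : BddAbove J ∨ ∃ ε > 0, ∀ y ∈ J, ε ≤ y := hcase.imp (fun h => h.1.bddAbove)
    fun h => exists_pos_forall_le_of_zero_notMem_closure hJpos h.2
  have hsq (x : ℝ) (hx : x ∈ J) : f (f x) * x = f x ^ 2 :=
    apply_apply_mul_eq_sq hJpos hmap heq hbound hx
  obtain ⟨x₀, hx₀⟩ : J.Nonempty := by
    rcases hcase with ⟨-, h⟩ | ⟨h, -⟩
    · exact closure_nonempty_iff.1 ⟨0, h⟩
    · exact nonempty_iff_ne_empty.2 fun he => h (he ▸ Bornology.isBounded_empty)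
  have hx₀pos : 0 < x₀ := hJpos hx₀
  refine ⟨f x₀ / x₀, div_pos (hJpos (hmap hx₀)) hx₀pos, fun x hx => ?_,
    fun h => div_le_one_of_bddAbove hJpos hmap hsq h.1.bddAbove hx₀, fun h => ?_⟩
  · rw [← div_eq_div_of_apply_apply_mul_eq_sq hJpos hJ hmap hcont hsq hx hx₀,
      div_mul_cancel₀ _ (hJpos hx : 0 < x).ne']
  · obtain ⟨ε, hε, hle⟩ := exists_pos_forall_le_of_zero_notMem_closure hJpos h.2
    exact one_le_div_of_forall_le hJpos hmap hsq hε hle hx₀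

/-- Let `J ⊆ (0, ∞)` be a nondegenerate interval such that either (a) `J` is bounded and
`0 ∈ closure J`, or (b) `J` is unbounded and `0 ∉ closure J`. If `f : J → J` is
continuous and satisfies `f(f(f x)) = (f x)^3 / x^2` on `J`, then there is `c > 0` with
`f(x) = c x` on `J`; moreover `c ≤ 1` in case (a) and `c ≥ 1` in case (b). -/
theorem stmt_18 (J : Set ℝ) (hJpos : J ⊆ Set.Ioi (0 : ℝ)) (hJ : J.OrdConnected)
    (hnd : J.Nontrivial)
    (hcase : (Bornology.IsBounded J ∧ (0 : ℝ) ∈ closure J) ∨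
      (¬Bornology.IsBounded J ∧ (0 : ℝ) ∉ closure J))
    (f : ℝ → ℝ) (hmap : Set.MapsTo f J J) (hcont : ContinuousOn f J)
    (heq : ∀ x ∈ J, f (f (f x)) = (f x) ^ 3 / x ^ 2) :
    ∃ c : ℝ, 0 < c ∧ (∀ x ∈ J, f x = c * x) ∧
      (Bornology.IsBounded J ∧ (0 : ℝ) ∈ closure J → c ≤ 1) ∧
      (¬Bornology.IsBounded J ∧ (0 : ℝ) ∉ closure J → 1 ≤ c) :=
  stmt_18_general J hJpos hJ hcase f hmap hcont heq
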